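/- Let R be a binary relation on subgroups of G refining inclusion, and let N ⊆ G be a normal subgroup such that N ⊆ K for every pair (K,H) ∈ R. Then for every nontrivial relation (K,H) in the generated transfer system ⟨R⟩, we have H ⊄ N (H is not contained in N). -/

import Mathlib

open Pointwise

/-- Conjugate of a subgroup: `conjS g H = g H g⁻¹`. -/
def conjS {G : Type} [Group G] (g : G) (H : Subgroup G) : Subgroup G :=
  MulAut.conj g • H

/-- A `G`-transfer system: a partial order on the subgroups of `G` refining
inclusion, closed under conjugation and restriction. -/
structure TransferSystem (G : Type) [Group G] where
  rel : Subgroup G → Subgroup G → Prop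
  le_of_rel : ∀ K H : Subgroup G, rel K H → K ≤ H
  refl : ∀ H : Subgroup G, rel H H
  antisymm : ∀ K H : Subgroup G, rel K H → rel H K → K = H
  trans : ∀ J K H : Subgroup G, rel J K → rel K H → rel J H
  conj : ∀ (K H : Subgroup G) (g : G), rel K H → rel (conjS g K) (conjS g H)
  res : ∀ K H L : Subgroup G, rel K H → L ≤ H → rel (K ⊓ L) L

/-- The transfer system generated by a relation `R`, described as a relation:
`genRel R K H` holds iff every transfer system containing `R` relates `K` to
`H`; i.e. it is the smallest transfer system containing `R`. -/
def genRel {G : Type} [Group G] (R : Subgroup G → Subgroup G → Prop)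
    (K H : Subgroup G) : Prop :=
  ∀ T : TransferSystem G, (∀ A B, R A B → T.rel A B) → T.rel K H

/-!
The pairs `K ≤ H` with `N ⊓ H ≤ K` form a transfer system: restriction and transitivity are
lattice computations, and conjugation invariance is where normality of `N` enters. The hypothesis
`N ≤ K` puts every pair of `R` into it, hence also every pair of `⟨R⟩`. If moreover `H ≤ N`, then
`H = N ⊓ H ≤ K ≤ H`, so the pair is trivial.
-/

lemma conjS_inf {G : Type} [Group G] (g : G) (A B : Subgroup G) :
    conjS g (A ⊓ B) = conjS g A ⊓ conjS g B :=
  Subgroup.smul_inf _ _ _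

lemma conjS_mono {G : Type} [Group G] (g : G) {A B : Subgroup G} (h : A ≤ B) :
    conjS g A ≤ conjS g B :=
  Subgroup.pointwise_smul_le_pointwise_smul_iff.2 h

lemma conjS_eq_self_of_normal {G : Type} [Group G] (g : G) {N : Subgroup G} (hN : N.Normal) :
    conjS g N = N :=
  @Subgroup.Normal.conj_smul_eq_self _ _ g N hN

namespace TransferSystem

variable {G : Type} [Group G]

def ofNormal (N : Subgroup G) (hN : N.Normal) : TransferSystem G where
  rel K H := K ≤ H ∧ N ⊓ H ≤ K
  le_of_rel _ _ h := h.1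
  refl _ := ⟨le_rfl, inf_le_right⟩
  antisymm _ _ h₁ h₂ := le_antisymm h₁.1 h₂.1
  trans _ _ _ h₁ h₂ := ⟨h₁.1.trans h₂.1, (le_inf inf_le_left h₂.2).trans h₁.2⟩
  conj _ _ g h := ⟨conjS_mono g h.1, by
    simpa only [conjS_inf, conjS_eq_self_of_normal g hN] using conjS_mono g h.2⟩
  res _ _ _ h hL :=
    ⟨inf_le_right, le_inf ((le_inf inf_le_left (inf_le_right.trans hL)).trans h.2) inf_le_right⟩

lemma eq_of_rel_ofNormal {N : Subgroup G} {hN : N.Normal} {K H : Subgroup G}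
    (h : (ofNormal N hN).rel K H) (hHN : H ≤ N) : K = H :=
  le_antisymm h.1 ((le_inf hHN le_rfl).trans h.2)

end TransferSystem

theorem stmt8_general {G : Type} [Group G]
    (R : Subgroup G → Subgroup G → Prop) (hR : ∀ K H, R K H → K ≤ H)
    (N : Subgroup G) (hN : N.Normal) (hRN : ∀ K H, R K H → N ≤ K) :
    ∀ K H : Subgroup G, genRel R K H → K ≠ H → ¬ H ≤ N := by
  intro K H hKH hne hHN
  have hR_sub : ∀ A B, R A B → (TransferSystem.ofNormal N hN).rel A B :=
    fun A B hAB => ⟨hR A B hAB, inf_le_of_left_le (hRN A B hAB)⟩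
  exact hne (TransferSystem.eq_of_rel_ofNormal (hKH _ hR_sub) hHN)

/-- Let `R` be a relation on subgroups of `G` refining
inclusion and `N ⊆ G` a normal subgroup such that `N ≤ K` for every pair
`(K, H) ∈ R`.  Then for every nontrivial relation `(K, H)` in the generated
transfer system `⟨R⟩`, the subgroup `H` is not contained in `N`. -/
theorem stmt8 {G : Type} [Group G] [Finite G]
    (R : Subgroup G → Subgroup G → Prop) (hR : ∀ K H, R K H → K ≤ H)
    (N : Subgroup G) (hN : N.Normal) (hRN : ∀ K H, R K H → N ≤ K) :
    ∀ K H : Subgroup G, genRel R K H → K ≠ H → ¬ H ≤ N :=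
  stmt8_general R hR N hN hRN
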